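/- The function 𝒱 is lower semicontinuous on Δ_S, and the kernel F_𝒱 is lower semicontinuous and bounded from below on Δ_S × Δ_S. -/

import Mathlib

open MeasureTheory Filter Topology
open scoped ENNReal NNReal

/-- `⊤`-aware positive part of an extended real, as a value in `ℝ≥0∞`. -/
noncomputable def EReal.posPart' (x : EReal) : ℝ≥0∞ :=
  if x = ⊤ then ⊤ else ENNReal.ofReal x.toReal

/-- Integral of an `EReal`-valued function: positive part minus negative part. -/
noncomputable def eIntegral {α : Type*} [MeasurableSpace α] (μ : Measure α) (f : α → EReal) :
    EReal :=
  ((∫⁻ x, (f x).posPart' ∂μ : ℝ≥0∞) : EReal) - ((∫⁻ x, (-(f x)).posPart' ∂μ : ℝ≥0∞) : EReal)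

/-- `log (1/r)` as an extended real, equal to `+∞` at `r = 0`. -/
noncomputable def negLog (r : ℝ) : EReal :=
  if r = 0 then ⊤ else ((- Real.log r : ℝ) : EReal)

/-- The weighted logarithmic kernel `F_W(x,y) = (β/2) log(1/|x-y|) + W(x)/2 + W(y)/2`. -/
noncomputable def kern {α : Type*} [PseudoMetricSpace α] (β : ℝ) (W : α → EReal) (x y : α) :
    EReal :=
  ((β / 2 : ℝ) : EReal) * negLog (dist x y) + ((2⁻¹ : ℝ) : EReal) * W x
    + ((2⁻¹ : ℝ) : EReal) * W y

/-- The weighted logarithmic energy `I_W(μ) = ∬ F_W(x,y) dμ(x) dμ(y)`. -/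
noncomputable def energy {α : Type*} [MeasurableSpace α] [PseudoMetricSpace α] (β : ℝ)
    (W : α → EReal) (μ : Measure α) : EReal :=
  eIntegral (μ.prod μ) (fun p => kern β W p.1 p.2)

/-- The set of (Borel) probability measures carried by the closed set `Δ`,
i.e. `M_1(Δ)` viewed inside the probability measures on the ambient space. -/
def M1 {α : Type*} [MeasurableSpace α] [TopologicalSpace α]
    (Δ : Set α) : Set (ProbabilityMeasure α) :=
  {μ | (μ : Measure α) Δᶜ = 0}

/-- The filter `|x| → ∞, x ∈ Δ`. -/
noncomputable def atComplexInftyWithin (Δ : Set ℂ) : Filter ℂ :=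
  (Filter.comap (fun x : ℂ => ‖x‖) Filter.atTop) ⊓ Filter.principal Δ

/-- The weak growth assumption : `liminf_{|x| → ∞, x ∈ Δ} (V(x) - β' log |x|) > -∞`
for some `β' > 1` with `β' ≥ β`. -/
def WeakGrowth (β : ℝ) (Δ : Set ℂ) (V : ℂ → ℝ) : Prop :=
  ∃ β' : ℝ, 1 < β' ∧ β ≤ β' ∧
    (⊥ : EReal) <
      Filter.liminf (fun x : ℂ => ((V x - β' * Real.log (‖x‖) : ℝ) : EReal))
        (atComplexInftyWithin Δ)

/-- The inverse stereographic projection from `ℂ` onto the Riemann sphere `S ⊂ ℝ³`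
(the sphere of radius `1/2` centered at `(0,0,1/2)`). -/
noncomputable def Tst (x : ℂ) : EuclideanSpace ℝ (Fin 3) :=
  (EuclideanSpace.equiv (Fin 3) ℝ).symm
    ![x.re / (1 + ‖x‖ ^ 2), x.im / (1 + ‖x‖ ^ 2),
      ‖x‖ ^ 2 / (1 + ‖x‖ ^ 2)]

/-- The north pole `∞ = (0,0,1)` of the Riemann sphere. -/
noncomputable def sInfty : EuclideanSpace ℝ (Fin 3) :=
  (EuclideanSpace.equiv (Fin 3) ℝ).symm ![0, 0, 1]

lemma continuous_Tst : Continuous Tst := by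
  refine ((EuclideanSpace.equiv (Fin 3) ℝ).symm.continuous).comp ?_
  have h : Continuous fun x : ℂ => 1 + ‖x‖ ^ 2 :=
    continuous_const.add (continuous_norm.pow 2)
  have hne : ∀ x : ℂ, 1 + ‖x‖ ^ 2 ≠ 0 := fun x => by positivity
  refine continuous_pi fun i => ?_
  fin_cases i
  · exact (Complex.continuous_re.div h hne).congr fun a => by simp
  · exact (Complex.continuous_im.div h hne).congr fun a => by simp
  · exact ((continuous_norm.pow 2).div h hne).congr fun a => by simp

/-- Push-forward of a probability measure by the inverse stereographic projection `T`. -/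
noncomputable def pushT (μ : ProbabilityMeasure ℂ) :
    ProbabilityMeasure (EuclideanSpace ℝ (Fin 3)) :=
  μ.map continuous_Tst.measurable.aemeasurable

/-- `Δ_S`, the closure in the sphere of the image of `Δ` by `T`. -/
noncomputable def deltaS (Δ : Set ℂ) : Set (EuclideanSpace ℝ (Fin 3)) :=
  closure (Tst '' Δ)

/-- The weak growth assumption for an extended-real-valued potential:
`liminf_{|x| → ∞, x ∈ Δ} (V(x) - β' log |x|) > -∞` for some `β' > 1` with `β' ≥ β`. -/
def WeakGrowthE (β : ℝ) (Δ : Set ℂ) (V : ℂ → EReal) : Prop :=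
  ∃ β' : ℝ, 1 < β' ∧ β ≤ β' ∧
    (⊥ : EReal) <
      Filter.liminf
        (fun x : ℂ => V x - ((β' * Real.log (‖x‖) : ℝ) : EReal))
        (atComplexInftyWithin Δ)

/-- The defining property of the potential `𝒱` on the sphere built from `V`:
`𝒱(T x) = V(x) - (β/2) log (1+|x|²)` on `Δ` and
`𝒱(∞) = liminf_{|x|→∞, x ∈ Δ} (V(x) - (β/2) log (1+|x|²))`. -/
def IsSpherePotential (β : ℝ) (Δ : Set ℂ) (V : ℂ → EReal)
    (𝒱 : EuclideanSpace ℝ (Fin 3) → EReal) : Prop :=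
  (∀ x ∈ Δ, 𝒱 (Tst x) =
      V x - ((β / 2 * Real.log (1 + ‖x‖ ^ 2) : ℝ) : EReal)) ∧
    𝒱 sInfty =
      Filter.liminf
        (fun x : ℂ => V x - ((β / 2 * Real.log (1 + ‖x‖ ^ 2) : ℝ) : EReal))
        (atComplexInftyWithin Δ)

/-!
Extend `T` to the one-point compactification `ℂ ∪ {∞}` by `T ∞ = (0,0,1)`. As a continuous
injection of a compact space it is a closed embedding, and `Δ_S` is the image of `Δ ∪ {∞}`.
Pulled back along it, `𝒱` is `V - (β/2) log (1 + |x|²)` on `Δ`, which is lower semicontinuous,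
and its `liminf` at `∞`, so it is lower semicontinuous on `Δ ∪ {∞}`. The growth condition gives
`𝒱 ∞ > -∞`, so `𝒱` is bounded below on the compact set `Δ_S`; and since `Δ_S` lies on a sphere
of diameter `1`, `log (1/|z - w|) ≥ 0` there, whence `F_𝒱 ≥ min 𝒱`.
-/

open Set

section Semicontinuity

variable {α β γ : Type*} [TopologicalSpace α] [TopologicalSpace β]

theorem Topology.IsInducing.lowerSemicontinuousOn_image [Preorder γ] {f : α → β}
    (hf : IsInducing f) {W : β → γ} {s : Set α} (hW : LowerSemicontinuousOn (W ∘ f) s) :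
    LowerSemicontinuousOn W (f '' s) := by
  rintro _ ⟨x, hx, rfl⟩ c hc
  rw [← hf.map_nhdsWithin_eq]
  exact hW x hx c hc

theorem LowerSemicontinuousWithinAt.ereal_add {f g : α → EReal} {s : Set α} {x : α}
    (hf : LowerSemicontinuousWithinAt f s x) (hg : LowerSemicontinuousWithinAt g s x) :
    LowerSemicontinuousWithinAt (fun z => f z + g z) s x := by
  by_cases hfx : f x = ⊥
  · intro c hc
    simp [hfx] at hc
  by_cases hgx : g x = ⊥
  · intro c hc
    simp [hgx] at hc
  exact hf.add' hg (EReal.continuousAt_add (.inr hgx) (.inl hfx))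

theorem LowerSemicontinuousOn.ereal_add {f g : α → EReal} {s : Set α}
    (hf : LowerSemicontinuousOn f s) (hg : LowerSemicontinuousOn g s) :
    LowerSemicontinuousOn (fun z => f z + g z) s :=
  fun x hx => LowerSemicontinuousWithinAt.ereal_add (hf x hx) (hg x hx)

theorem LowerSemicontinuousOn.ereal_sub_coe {f : α → EReal} {φ : α → ℝ} {s : Set α}
    (hf : LowerSemicontinuousOn f s) (hφ : ContinuousOn φ s) :
    LowerSemicontinuousOn (fun z => f z - (φ z : EReal)) s := by
  simp_rw [sub_eq_add_neg, ← EReal.coe_neg]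
  exact hf.ereal_add (continuous_coe_real_ereal.comp_continuousOn hφ.neg).lowerSemicontinuousOn

theorem EReal.continuous_coe_mul {b : ℝ} (hb : b ≠ 0) :
    Continuous fun y : EReal => (b : EReal) * y :=
  continuous_iff_continuousAt.2 fun _ =>
    (EReal.continuousAt_mul (.inl (EReal.coe_ne_zero.2 hb)) (.inl (EReal.coe_ne_zero.2 hb))
      (.inl (EReal.coe_ne_bot b)) (.inl (EReal.coe_ne_top b))).comp
      (continuous_const.prodMk continuous_id).continuousAt

theorem LowerSemicontinuousOn.ereal_coe_mul {f : α → EReal} {s : Set α} {b : ℝ} (hb : 0 < b)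
    (hf : LowerSemicontinuousOn f s) : LowerSemicontinuousOn (fun z => (b : EReal) * f z) s :=
  (EReal.continuous_coe_mul hb.ne').comp_lowerSemicontinuousOn hf
    fun _ _ h => mul_le_mul_of_nonneg_left h (EReal.coe_nonneg.2 hb.le)

theorem IsCompact.exists_coe_le_of_lowerSemicontinuousOn {K : Set α} (hK : IsCompact K)
    {f : α → EReal} (hf : LowerSemicontinuousOn f K) (hbot : ∀ x ∈ K, f x ≠ ⊥) :
    ∃ m : ℝ, ∀ x ∈ K, (m : EReal) ≤ f x := by
  rcases K.eq_empty_or_nonempty with rfl | hne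
  · exact ⟨0, by simp⟩
  obtain ⟨a, ha, hmin⟩ := hf.exists_isMinOn hne hK
  obtain ⟨m, -, hm⟩ := EReal.exists_between_coe_real (bot_lt_iff_ne_bot.2 (hbot a ha))
  exact ⟨m, fun x hx => hm.le.trans (hmin hx)⟩

end Semicontinuity

namespace OnePoint

variable {X : Type*}

theorem coe_preimage_insert_infty_image (s : Set X) :
    ((↑) : X → OnePoint X) ⁻¹' insert infty ((↑) '' s) = s := by
  ext; simp

variable [TopologicalSpace X]

theorem nhdsWithin_image_coe_infty (s : Set X) :
    𝓝[(↑) '' s] (infty : OnePoint X) = map (↑) (coclosedCompact X ⊓ 𝓟 s) := by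
  have hs : ((↑) '' s : Set (OnePoint X)) = {infty}ᶜ ∩ (↑) '' s :=
    (inter_eq_right.2 fun _ hq => by rintro rfl; exact infty_notMem_image_coe hq).symm
  rw [hs, nhdsWithin_inter', nhdsNE_infty_eq, ← map_inf_principal_preimage,
    coe_injective.preimage_image]

theorem lowerSemicontinuousOn_insert_infty {γ : Type*} [CompleteLinearOrder γ] {s : Set X}
    {W : OnePoint X → γ} (hW : LowerSemicontinuousOn (W ∘ (↑)) s)
    (hinf : W infty ≤ liminf (W ∘ (↑)) (coclosedCompact X ⊓ 𝓟 s)) :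
    LowerSemicontinuousOn W (insert infty ((↑) '' s)) := by
  intro p hp c hc
  induction p using OnePoint.rec with
  | infty =>
    rw [nhdsWithin_insert, eventually_sup, eventually_pure, nhdsWithin_image_coe_infty]
    exact ⟨hc, eventually_map.2 (eventually_lt_of_lt_liminf (hc.trans_le hinf))⟩
  | coe x =>
    rw [nhdsWithin_coe, coe_preimage_insert_infty_image]
    exact hW x (by simpa using hp) c hc

end OnePoint

lemma EReal.coe_sub_le_sub_coe_of_lt_sub_coe {a : EReal} {b r s C : ℝ}
    (h : (b : EReal) < a - r) (hs : s ≤ r + C) : ((b - C : ℝ) : EReal) ≤ a - s := by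
  induction a with
  | bot => simp at h
  | coe a =>
    norm_cast at h ⊢
    linarith
  | top => simp

lemma Real.log_one_add_sq_le {t : ℝ} (ht : 1 ≤ t) :
    Real.log (1 + t ^ 2) ≤ 2 * Real.log t + Real.log 2 := by
  calc Real.log (1 + t ^ 2) ≤ Real.log (2 * t ^ 2) :=
        Real.log_le_log (by positivity) (by nlinarith)
    _ = 2 * Real.log t + Real.log 2 := by
        rw [Real.log_mul two_ne_zero (by positivity), Real.log_pow]
        push_cast
        ring

noncomputable def sphereCenter : EuclideanSpace ℝ (Fin 3) :=
  (EuclideanSpace.equiv (Fin 3) ℝ).symm ![0, 0, 1 / 2]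

lemma EuclideanSpace.dist_sq_fin_three (p q : EuclideanSpace ℝ (Fin 3)) :
    dist p q ^ 2 = (p 0 - q 0) ^ 2 + (p 1 - q 1) ^ 2 + (p 2 - q 2) ^ 2 := by
  rw [EuclideanSpace.dist_eq, Real.sq_sqrt (by positivity), Fin.sum_univ_three]
  simp only [Real.dist_eq, sq_abs]

lemma dist_Tst_sInfty_sq (x : ℂ) : dist (Tst x) sInfty ^ 2 = (1 + ‖x‖ ^ 2)⁻¹ := by
  rw [EuclideanSpace.dist_sq_fin_three]
  change (x.re / (1 + ‖x‖ ^ 2) - 0) ^ 2 + (x.im / (1 + ‖x‖ ^ 2) - 0) ^ 2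
    + (‖x‖ ^ 2 / (1 + ‖x‖ ^ 2) - 1) ^ 2 = _
  have := Complex.sq_norm_sub_sq_re x
  field_simp
  nlinarith

lemma dist_Tst_sphereCenter (x : ℂ) : dist (Tst x) sphereCenter = 1 / 2 := by
  rw [← sq_eq_sq₀ dist_nonneg (by norm_num), EuclideanSpace.dist_sq_fin_three]
  change (x.re / (1 + ‖x‖ ^ 2) - 0) ^ 2 + (x.im / (1 + ‖x‖ ^ 2) - 0) ^ 2
    + (‖x‖ ^ 2 / (1 + ‖x‖ ^ 2) - 1 / 2) ^ 2 = _
  have := Complex.sq_norm_sub_sq_re x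
  field_simp
  nlinarith

lemma Tst_injective : Function.Injective Tst := by
  intro x y h
  have h0 := congrArg (· 0) h
  have h1 := congrArg (· 1) h
  have h2 := congrArg (· 2) h
  change x.re / (1 + ‖x‖ ^ 2) = y.re / (1 + ‖y‖ ^ 2) at h0
  change x.im / (1 + ‖x‖ ^ 2) = y.im / (1 + ‖y‖ ^ 2) at h1
  change ‖x‖ ^ 2 / (1 + ‖x‖ ^ 2) = ‖y‖ ^ 2 / (1 + ‖y‖ ^ 2) at h2
  have hn : ‖x‖ ^ 2 = ‖y‖ ^ 2 := by
    field_simp at h2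
    linarith
  rw [hn] at h0 h1
  refine Complex.ext ?_ ?_
  · simpa [div_left_inj' (by positivity : (1 : ℝ) + ‖y‖ ^ 2 ≠ 0)] using h0
  · simpa [div_left_inj' (by positivity : (1 : ℝ) + ‖y‖ ^ 2 ≠ 0)] using h1

lemma Tst_ne_sInfty (x : ℂ) : Tst x ≠ sInfty := by
  intro h
  have h2 := congrArg (· 2) h
  change ‖x‖ ^ 2 / (1 + ‖x‖ ^ 2) = 1 at h2
  rw [div_eq_one_iff_eq (by positivity)] at h2
  linarith

lemma tendsto_Tst_coclosedCompact : Tendsto Tst (coclosedCompact ℂ) (𝓝 sInfty) := by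
  rw [coclosedCompact_eq_cocompact, ← Metric.cobounded_eq_cocompact, ← comap_norm_atTop,
    tendsto_iff_dist_tendsto_zero]
  have hsq : Tendsto (fun x : ℂ => dist (Tst x) sInfty ^ 2) (comap norm atTop) (𝓝 0) := by
    simp_rw [dist_Tst_sInfty_sq]
    refine tendsto_inv_atTop_zero.comp (tendsto_atTop_add_const_left _ 1 ?_)
    exact (tendsto_pow_atTop two_ne_zero).comp tendsto_comap
  simpa using hsq.sqrt

noncomputable def onePointTst : C(OnePoint ℂ, EuclideanSpace ℝ (Fin 3)) :=
  OnePoint.continuousMapMk ⟨Tst, continuous_Tst⟩ sInfty tendsto_Tst_coclosedCompact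

@[simp] lemma onePointTst_coe (x : ℂ) : onePointTst x = Tst x := rfl

@[simp] lemma onePointTst_infty : onePointTst OnePoint.infty = sInfty := rfl

lemma isClosedEmbedding_onePointTst : IsClosedEmbedding onePointTst := by
  refine onePointTst.continuous.isClosedEmbedding ?_
  intro p q h
  induction p using OnePoint.rec <;> induction q using OnePoint.rec
  · rfl
  · exact absurd h.symm (Tst_ne_sInfty _)
  · exact absurd h (Tst_ne_sInfty _)
  · exact congrArg _ (Tst_injective h)

lemma deltaS_subset_image_onePointTst {Δ : Set ℂ} (hΔ : IsClosed Δ) :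
    deltaS Δ ⊆ onePointTst '' insert OnePoint.infty ((↑) '' Δ) := by
  refine closure_minimal ?_ (isClosedEmbedding_onePointTst.isClosedMap _ ?_)
  · rintro _ ⟨x, hx, rfl⟩
    exact ⟨x, mem_insert_of_mem _ (mem_image_of_mem _ hx), rfl⟩
  · rw [OnePoint.isClosed_iff_of_mem (mem_insert _ _)]
    rwa [OnePoint.coe_preimage_insert_infty_image]

lemma deltaS_subset_sphere (Δ : Set ℂ) : deltaS Δ ⊆ Metric.sphere sphereCenter (1 / 2) := by
  refine closure_minimal ?_ Metric.isClosed_sphere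
  rintro _ ⟨x, -, rfl⟩
  exact dist_Tst_sphereCenter x

lemma isCompact_deltaS (Δ : Set ℂ) : IsCompact (deltaS Δ) :=
  (isCompact_sphere _ _).of_isClosed_subset isClosed_closure (deltaS_subset_sphere Δ)

lemma dist_le_one_of_mem_deltaS {Δ : Set ℂ} {z w : EuclideanSpace ℝ (Fin 3)}
    (hz : z ∈ deltaS Δ) (hw : w ∈ deltaS Δ) : dist z w ≤ 1 := by
  have hz' := deltaS_subset_sphere Δ hz
  have hw' := deltaS_subset_sphere Δ hw
  rw [Metric.mem_sphere] at hz' hw'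
  linarith [dist_triangle_right z w sphereCenter]

lemma atComplexInftyWithin_eq (Δ : Set ℂ) :
    atComplexInftyWithin Δ = coclosedCompact ℂ ⊓ 𝓟 Δ := by
  rw [atComplexInftyWithin, comap_norm_atTop, Metric.cobounded_eq_cocompact,
    coclosedCompact_eq_cocompact]

lemma WeakGrowthE.bot_lt_liminf {β : ℝ} (hβ : 0 ≤ β) {Δ : Set ℂ} {V : ℂ → EReal}
    (h : WeakGrowthE β Δ V) :
    ⊥ < liminf (fun x : ℂ => V x - ((β / 2 * Real.log (1 + ‖x‖ ^ 2) : ℝ) : EReal))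
      (atComplexInftyWithin Δ) := by
  obtain ⟨β', -, hββ', hlim⟩ := h
  obtain ⟨b, -, hb⟩ := EReal.exists_between_coe_real hlim
  have h1 : ∀ᶠ x in atComplexInftyWithin Δ, 1 ≤ ‖x‖ :=
    mem_inf_of_left (preimage_mem_comap (Ici_mem_atTop 1))
  refine (EReal.bot_lt_coe (b - β / 2 * Real.log 2)).trans_le (le_liminf_of_le ?_ ?_)
  · isBoundedDefault
  filter_upwards [eventually_lt_of_lt_liminf hb, h1] with x hx hx1
  refine EReal.coe_sub_le_sub_coe_of_lt_sub_coe hx ?_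
  have hlog := Real.log_one_add_sq_le hx1
  have := mul_le_mul_of_nonneg_right hββ' (Real.log_nonneg hx1)
  nlinarith

section SpherePotential

variable {β : ℝ} {Δ : Set ℂ} {V : ℂ → EReal} {𝒱 : EuclideanSpace ℝ (Fin 3) → EReal}

lemma IsSpherePotential.lowerSemicontinuousOn (h𝒱 : IsSpherePotential β Δ V 𝒱)
    (hΔ : IsClosed Δ) (hV : LowerSemicontinuousOn V Δ) :
    LowerSemicontinuousOn 𝒱 (deltaS Δ) := by
  refine (isClosedEmbedding_onePointTst.isInducing.lowerSemicontinuousOn_image ?_).mono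
    (deltaS_subset_image_onePointTst hΔ)
  have hlog : Continuous fun x : ℂ => β / 2 * Real.log (1 + ‖x‖ ^ 2) :=
    continuous_const.mul ((continuous_const.add (continuous_norm.pow 2)).log
      fun x => (by positivity : (0 : ℝ) < 1 + ‖x‖ ^ 2).ne')
  refine OnePoint.lowerSemicontinuousOn_insert_infty ?_ (le_of_eq ?_)
  · have hsub := hV.ereal_sub_coe hlog.continuousOn
    exact fun x hx => LowerSemicontinuousWithinAt.congr_of_eventuallyEq (hsub x hx) hx
      (eventually_nhdsWithin_of_forall fun y hy => (h𝒱.1 y hy).symm)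
  · rw [Function.comp_apply, onePointTst_infty, h𝒱.2, atComplexInftyWithin_eq]
    exact liminf_congr (eventually_inf_principal.2 (.of_forall fun x hx => (h𝒱.1 x hx).symm))

lemma IsSpherePotential.ne_bot (h𝒱 : IsSpherePotential β Δ V 𝒱) (hβ : 0 ≤ β) (hΔ : IsClosed Δ)
    (hV : ∀ x ∈ Δ, V x ≠ ⊥) (hgrowth : WeakGrowthE β Δ V) :
    ∀ z ∈ deltaS Δ, 𝒱 z ≠ ⊥ := by
  intro z hz
  obtain ⟨p, hp, rfl⟩ := deltaS_subset_image_onePointTst hΔ hz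
  rcases hp with rfl | ⟨x, hx, rfl⟩
  · rw [onePointTst_infty, h𝒱.2]
    exact (hgrowth.bot_lt_liminf hβ).ne'
  · rw [onePointTst_coe, h𝒱.1 x hx, sub_eq_add_neg, ← EReal.coe_neg, Ne, EReal.add_eq_bot_iff,
      not_or]
    exact ⟨hV x hx, EReal.coe_ne_bot _⟩

end SpherePotential

section Kernel

variable {α : Type*} [PseudoMetricSpace α] {β : ℝ} {W : α → EReal}

lemma continuous_negLog : Continuous negLog := by
  refine continuous_iff_continuousAt.2 fun r => ?_
  rcases eq_or_ne r 0 with rfl | hr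
  · rw [← continuousWithinAt_compl_self, ContinuousWithinAt, negLog, if_pos rfl]
    refine (EReal.tendsto_coe_atTop.comp
      (tendsto_neg_atBot_atTop.comp Real.tendsto_log_nhdsNE_zero)).congr' ?_
    filter_upwards [self_mem_nhdsWithin] with y (hy : y ≠ 0)
    simp [negLog, hy]
  · have h : negLog =ᶠ[𝓝 r] fun y => ((-Real.log y : ℝ) : EReal) := by
      filter_upwards [isOpen_compl_singleton.mem_nhds hr] with y (hy : y ≠ 0)
      rw [negLog, if_neg hy]
    exact ((continuous_coe_real_ereal.continuousAt.comp
      (Real.continuousAt_log hr).neg)).congr h.symm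

lemma negLog_nonneg {r : ℝ} (hr0 : 0 ≤ r) (hr1 : r ≤ 1) : 0 ≤ negLog r := by
  unfold negLog
  split_ifs
  · exact le_top
  · exact EReal.coe_nonneg.2 (neg_nonneg.2 (Real.log_nonpos hr0 hr1))

lemma lowerSemicontinuousOn_kern (hβ : 0 < β) {K : Set α} (hW : LowerSemicontinuousOn W K) :
    LowerSemicontinuousOn (fun p : α × α => kern β W p.1 p.2) (K ×ˢ K) := by
  have hlog : LowerSemicontinuousOn
      (fun p : α × α => ((β / 2 : ℝ) : EReal) * negLog (dist p.1 p.2)) (K ×ˢ K) :=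
    ((EReal.continuous_coe_mul (by positivity)).comp
      (continuous_negLog.comp continuous_dist)).continuousOn.lowerSemicontinuousOn
  have hfst := (hW.comp continuousOn_fst (mapsTo_fst_prod (t := K))).ereal_coe_mul
    (b := 2⁻¹) (by norm_num)
  have hsnd := (hW.comp continuousOn_snd (mapsTo_snd_prod (s := K))).ereal_coe_mul
    (b := 2⁻¹) (by norm_num)
  exact (hlog.ereal_add hfst).ereal_add hsnd

lemma coe_le_kern (hβ : 0 ≤ β) {z w : α} (hzw : dist z w ≤ 1) {m : ℝ} (hz : (m : EReal) ≤ W z)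
    (hw : (m : EReal) ≤ W w) : (m : EReal) ≤ kern β W z w := by
  have hlog : 0 ≤ ((β / 2 : ℝ) : EReal) * negLog (dist z w) :=
    EReal.mul_nonneg (EReal.coe_nonneg.2 (by positivity)) (negLog_nonneg dist_nonneg hzw)
  have hhalf : ∀ {y : EReal}, (m : EReal) ≤ y →
      ((2⁻¹ * m : ℝ) : EReal) ≤ ((2⁻¹ : ℝ) : EReal) * y :=
    fun hy => (EReal.coe_mul _ _).trans_le
      (mul_le_mul_of_nonneg_left hy (EReal.coe_nonneg.2 (by norm_num)))
  calc (m : EReal) = 0 + ((2⁻¹ * m : ℝ) : EReal) + ((2⁻¹ * m : ℝ) : EReal) := by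
        rw [zero_add, ← EReal.coe_add]
        congr 1
        ring
    _ ≤ kern β W z w := add_le_add (add_le_add hlog (hhalf hz)) (hhalf hw)

end Kernel

theorem spherePotential_lsc_and_kernel_bddBelow_general (β : ℝ) (hβ : 0 < β)
    (Δ : Set ℂ) (hΔclosed : IsClosed Δ)
    (V : ℂ → EReal) (hVbot : ∀ x ∈ Δ, V x ≠ ⊥) (hVlsc : LowerSemicontinuousOn V Δ)
    (hgrowth : WeakGrowthE β Δ V)
    (𝒱 : EuclideanSpace ℝ (Fin 3) → EReal) (h𝒱 : IsSpherePotential β Δ V 𝒱) :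
    LowerSemicontinuousOn 𝒱 (deltaS Δ) ∧
      LowerSemicontinuousOn (fun p : EuclideanSpace ℝ (Fin 3) × EuclideanSpace ℝ (Fin 3) =>
        kern β 𝒱 p.1 p.2) ((deltaS Δ) ×ˢ (deltaS Δ)) ∧
      ∃ m : ℝ, ∀ z ∈ deltaS Δ, ∀ w ∈ deltaS Δ, (m : EReal) ≤ kern β 𝒱 z w := by
  have hlsc := h𝒱.lowerSemicontinuousOn hΔclosed hVlsc
  obtain ⟨m, hm⟩ := (isCompact_deltaS Δ).exists_coe_le_of_lowerSemicontinuousOn hlsc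
    (h𝒱.ne_bot hβ.le hΔclosed hVbot hgrowth)
  exact ⟨hlsc, lowerSemicontinuousOn_kern hβ hlsc, m, fun z hz w hw =>
    coe_le_kern hβ.le (dist_le_one_of_mem_deltaS hz hw) (hm z hz) (hm w hw)⟩

theorem spherePotential_lsc_and_kernel_bddBelow (β : ℝ) (hβ : 0 < β)
    (Δ : Set ℂ) (hΔclosed : IsClosed Δ) (hΔunbounded : ¬ Bornology.IsBounded Δ)
    (V : ℂ → EReal) (hVbot : ∀ x ∈ Δ, V x ≠ ⊥) (hVlsc : LowerSemicontinuousOn V Δ)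
    (hgrowth : WeakGrowthE β Δ V)
    (𝒱 : EuclideanSpace ℝ (Fin 3) → EReal) (h𝒱 : IsSpherePotential β Δ V 𝒱) :
    LowerSemicontinuousOn 𝒱 (deltaS Δ) ∧
      LowerSemicontinuousOn (fun p : EuclideanSpace ℝ (Fin 3) × EuclideanSpace ℝ (Fin 3) =>
        kern β 𝒱 p.1 p.2) ((deltaS Δ) ×ˢ (deltaS Δ)) ∧
      ∃ m : ℝ, ∀ z ∈ deltaS Δ, ∀ w ∈ deltaS Δ, (m : EReal) ≤ kern β 𝒱 z w :=
  spherePotential_lsc_and_kernel_bddBelow_general β hβ Δ hΔclosed V hVbot hVlsc hgrowth 𝒱 h𝒱
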